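/- arXiv:2509.08144 — 6 statements merged into one kernel-verified Lean document; each statement's English description precedes it below -/
import Mathlib

section
/- Let M be a matroid with finite ground set in which every pair of flats is a modular pair, and let F be a flat of M. Then every pair of flats of the contraction M / F is a modular pair in M / F; that is, for all flats X, Y of M / F one has (M / F).rk X + (M / F).rk Y = (M / F).rk (X ∪ Y) + (M / F).rk (X ∩ Y). -/
/-!
If `X` and `Y` are flats of `M / C` with `C ⊆ M.E`, then `X ∪ C` and `Y ∪ C` are flats of `M`,
and ranks in the contraction satisfy `(M / C).rk Z + M.rk C = M.rk (Z ∪ C)`. Adding `2 · M.rk C`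
to the modular equation for `X, Y` in `M / C` therefore turns it into the modular equation for
`X ∪ C, Y ∪ C` in `M`, and since `M.rk C` is finite it can be cancelled again.
-/

open Matroid Set

/-- The contraction `M / C` of a matroid `M` by a set `C`, defined as the dual of the
restriction of the dual to the complement of `C`. -/
def Matroid.contract' {α : Type*} (M : Matroid α) (C : Set α) : Matroid α :=
  (M✶ ↾ (M.E \ C))✶

/-- The rank of a set `X` in a matroid `M`: the largest cardinality of an independent
subset of `X`. -/
noncomputable def Matroid.rk {α : Type*} (M : Matroid α) (X : Set α) : ℕ :=
  sSup {n : ℕ | ∃ I, M.Indep I ∧ I ⊆ X ∧ I.ncard = n}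

namespace Matroid

variable {α : Type*} {M : Matroid α} {C X Y : Set α}

lemma contract'_eq_contract (M : Matroid α) (C : Set α) : M.contract' C = M ／ C := rfl

-- For `X` of infinite rank both sides are junk `0`: `sSup` of an unbounded set and `⊤.toNat`.
lemma rk_eq_toNat_eRk (M : Matroid α) (X : Set α) : M.rk X = (M.eRk X).toNat := by
  have hS : {n : ℕ | ∃ I, M.Indep I ∧ I ⊆ X ∧ I.ncard = n} = {n : ℕ | (n : ℕ∞) ≤ M.eRk X} := by
    ext n
    simp only [mem_ofPred_eq, le_eRk_iff]
    constructor
    · rintro ⟨I, hI, hIX, rfl⟩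
      obtain hfin | hinf := I.finite_or_infinite
      · exact ⟨I, hIX, hI, hfin.cast_ncard_eq.symm⟩
      · exact ⟨∅, empty_subset _, M.empty_indep, by simp [hinf.ncard]⟩
    · rintro ⟨I, hIX, hI, hIn⟩
      exact ⟨I, hI, hIX, by rw [ncard_def, hIn, ENat.toNat_natCast]⟩
  rw [rk, hS]
  cases M.eRk X with
  | top => simp
  | coe r => simp only [Nat.cast_le]; exact csSup_Iic

lemma cast_rk [M.RankFinite] (X : Set α) : (M.rk X : ℕ∞) = M.eRk X := by
  rw [rk_eq_toNat_eRk, ENat.natCast_toNat (M.isRkFinite_set X).eRk_lt_top.ne]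

lemma rk_add_rk_eq_iff [M.RankFinite] {A B : Set α} :
    M.rk X + M.rk Y = M.rk A + M.rk B ↔ M.eRk X + M.eRk Y = M.eRk A + M.eRk B := by
  simp_rw [← cast_rk]
  norm_cast

lemma eRk_contract_add_eRk (M : Matroid α) (C X : Set α) :
    (M ／ C).eRk X + M.eRk C = M.eRk (X ∪ C) := by
  obtain ⟨J, hJ⟩ := M.exists_isBasis' C
  obtain ⟨K, hK, hJK⟩ := hJ.indep.subset_isBasis'_of_subset (hJ.subset.trans subset_union_right)
  have hKC : K ∩ C = J := (hJ.eq_of_subset_indep (hK.indep.inter_right C)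
    (subset_inter hJK hJ.subset) inter_subset_right).symm
  have hKX : (M ／ C).IsBasis' (K \ C) ((X ∪ C) \ C) :=
    hK.contract_isBasis' hJ (hK.indep.subset (union_subset sdiff_subset hJK))
  have hX : (M ／ C).eRk ((X ∪ C) \ C) = (M ／ C).eRk X := by
    rw [← eRk_inter_ground, eq_comm, ← eRk_inter_ground, contract_ground]
    congr 1
    tauto_set
  rw [← hX, hKX.eRk_eq_encard, ← hJ.encard_eq_eRk, ← hK.encard_eq_eRk, ← hKC,
    encard_sdiff_add_encard_inter]

lemma IsFlat.union_of_contract (hX : (M ／ C).IsFlat X) (hC : C ⊆ M.E) :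
    M.IsFlat (X ∪ C) := by
  have hXC : X ∪ C ⊆ M.E := union_subset (hX.subset_ground.trans sdiff_subset) hC
  rw [isFlat_iff_closure_eq] at hX ⊢
  rw [contract_closure_eq] at hX
  rw [← sdiff_union_of_subset (subset_union_right.trans (M.subset_closure _ hXC)), hX]

lemma eRk_contract_add_eRk_contract_eq (hC : M.IsRkFinite C)
    (h : M.eRk (X ∪ C) + M.eRk (Y ∪ C) = M.eRk (X ∪ C ∪ (Y ∪ C)) + M.eRk ((X ∪ C) ∩ (Y ∪ C))) :
    (M ／ C).eRk X + (M ／ C).eRk Y = (M ／ C).eRk (X ∪ Y) + (M ／ C).eRk (X ∩ Y) := by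
  refine WithTop.add_right_cancel (z := M.eRk C + M.eRk C)
    (WithTop.add_ne_top.2 ⟨hC.eRk_lt_top.ne, hC.eRk_lt_top.ne⟩) ?_
  calc (M ／ C).eRk X + (M ／ C).eRk Y + (M.eRk C + M.eRk C)
      = ((M ／ C).eRk X + M.eRk C) + ((M ／ C).eRk Y + M.eRk C) := by ring
    _ = ((M ／ C).eRk (X ∪ Y) + M.eRk C) + ((M ／ C).eRk (X ∩ Y) + M.eRk C) := by
      rw [eRk_contract_add_eRk, eRk_contract_add_eRk, h, ← union_union_distrib_right,
        ← inter_union_distrib_right, eRk_contract_add_eRk, eRk_contract_add_eRk]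
    _ = (M ／ C).eRk (X ∪ Y) + (M ／ C).eRk (X ∩ Y) + (M.eRk C + M.eRk C) := by ring

end Matroid

theorem modular_contract_flat_general {α : Type*} (M : Matroid α) [M.Finite]
    (hmod : ∀ X Y : Set α, M.IsFlat X → M.IsFlat Y →
      M.rk X + M.rk Y = M.rk (X ∪ Y) + M.rk (X ∩ Y))
    (F : Set α) :
    ∀ X Y : Set α, (M.contract' F).IsFlat X → (M.contract' F).IsFlat Y →
      (M.contract' F).rk X + (M.contract' F).rk Y =
        (M.contract' F).rk (X ∪ Y) + (M.contract' F).rk (X ∩ Y) := by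
  intro X Y hX hY
  rw [contract'_eq_contract, ← contract_inter_ground_eq] at hX hY ⊢
  refine rk_add_rk_eq_iff.2 (eRk_contract_add_eRk_contract_eq (M.isRkFinite_set _) ?_)
  exact rk_add_rk_eq_iff.1 <| hmod _ _ (hX.union_of_contract inter_subset_right)
    (hY.union_of_contract inter_subset_right)

/-- If every pair of flats of a matroid `M` with finite ground set is a modular pair, then
the same holds in the contraction `M / F` by any flat `F` of `M`. -/
theorem modular_contract_flat {α : Type*} (M : Matroid α) [M.Finite]
    (hmod : ∀ X Y : Set α, M.IsFlat X → M.IsFlat Y →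
      M.rk X + M.rk Y = M.rk (X ∪ Y) + M.rk (X ∩ Y))
    (F : Set α) (hF : M.IsFlat F) :
    ∀ X Y : Set α, (M.contract' F).IsFlat X → (M.contract' F).IsFlat Y →
      (M.contract' F).rk X + (M.contract' F).rk Y =
        (M.contract' F).rk (X ∪ Y) + (M.contract' F).rk (X ∩ Y) :=
  modular_contract_flat_general M hmod F
end

section
/- Let M be a matroid with finite ground set and let F be a flat of M. Then F is a modular flat (i.e., for every flat G of M one has M.rk F + M.rk G = M.rk (F ∪ G) + M.rk (F ∩ G)) if and only if for all flats G and H of M with G ⊆ H one has M.closure ((F ∩ H) ∪ G) = M.closure (F ∪ G) ∩ H. -/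
open Matroid

/-!
Via `M.rk = M.eRk`, rank-modularity of `F` is equality in the submodular inequality.
If it holds and `G ⊆ H` are flats, then `K = cl((F ∩ H) ∪ G) ⊆ L = cl(F ∪ G) ∩ H` are flats
with `cl(F ∪ K) = cl(F ∪ L)` and `F ∩ K = F ∩ L`, so modularity forces `rk K = rk L`, i.e. `K = L`.
Conversely, extend a basis `I` of `F ∩ G` to bases `B ⊇ I` of `F` and `J ⊇ I` of `G`. The modular
law for the flats `cl(J - e) ⊆ cl J` shows that no `e ∈ J \ B` lies in `cl(B ∪ (J - e))`, so
`B ∪ J` is independent, and `|B| + |J| = |B ∪ J| + |B ∩ J|` gives the reverse inequality.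
-/

open Set

namespace Matroid

variable {α : Type*} {M : Matroid α} {B J X Y F G H K L : Set α} {e : α}

lemma IsFlat.inter (hF : M.IsFlat F) (hG : M.IsFlat G) : M.IsFlat (F ∩ G) := by
  rw [inter_eq_iInter]
  exact IsFlat.iInter (by rintro (_ | _) <;> assumption)

section Rank

variable [M.RankFinite]

lemma cast_rk_eq_eRk (X : Set α) : (M.rk X : ℕ∞) = M.eRk X := by
  obtain ⟨I, hI⟩ := M.exists_isBasis' X
  have hmax : IsGreatest {n : ℕ | ∃ I, M.Indep I ∧ I ⊆ X ∧ I.ncard = n} I.ncard := by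
    refine ⟨⟨I, hI.indep, hI.subset, rfl⟩, ?_⟩
    rintro _ ⟨J, hJ, hJX, rfl⟩
    have hle := hJ.encard_le_eRk_of_subset hJX
    rwa [← hI.encard_eq_eRk, ← hJ.finite.cast_ncard_eq, ← hI.indep.finite.cast_ncard_eq,
      Nat.cast_le] at hle
  rw [rk, hmax.csSup_eq, hI.indep.finite.cast_ncard_eq, hI.encard_eq_eRk]

lemma rk_closure_congr (h : M.closure X = M.closure Y) : M.rk X = M.rk Y := by
  rw [← Nat.cast_inj (R := ℕ∞), cast_rk_eq_eRk, cast_rk_eq_eRk, ← eRk_closure_eq, h,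
    eRk_closure_eq]

lemma rk_union_add_rk_inter_le (X Y : Set α) :
    M.rk (X ∪ Y) + M.rk (X ∩ Y) ≤ M.rk X + M.rk Y := by
  rw [← Nat.cast_le (α := ℕ∞)]
  push_cast
  simp only [cast_rk_eq_eRk]
  rw [add_comm]
  exact M.eRk_inter_add_eRk_union_le X Y

lemma IsFlat.eq_of_subset_of_rk_le (hK : M.IsFlat K) (hL : M.IsFlat L) (hKL : K ⊆ L)
    (hr : M.rk L ≤ M.rk K) : K = L := by
  rw [← Nat.cast_le (α := ℕ∞), cast_rk_eq_eRk, cast_rk_eq_eRk] at hr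
  rw [← hK.closure, ← hL.closure]
  exact (M.isRkFinite_set K).closure_eq_closure_of_subset_of_eRk_ge_eRk hKL hr

lemma IsBasis'.rk_add_rk_eq_of_indep_union (hB : M.IsBasis' B X) (hJ : M.IsBasis' J Y)
    (hBJ : M.Indep (B ∪ J)) : M.rk X + M.rk Y = M.rk (X ∪ Y) + M.rk (X ∩ Y) := by
  refine le_antisymm ?_ (M.rk_union_add_rk_inter_le X Y)
  rw [← Nat.cast_le (α := ℕ∞)]
  push_cast
  simp only [cast_rk_eq_eRk]
  calc M.eRk X + M.eRk Y = B.encard + J.encard := by rw [hB.encard_eq_eRk, hJ.encard_eq_eRk]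
    _ = (B ∪ J).encard + (B ∩ J).encard := (encard_union_add_encard_inter B J).symm
    _ ≤ M.eRk (X ∪ Y) + M.eRk (X ∩ Y) := add_le_add
        (hBJ.encard_le_eRk_of_subset (union_subset_union hB.subset hJ.subset))
        ((hBJ.subset (inter_subset_left.trans subset_union_left)).encard_le_eRk_of_subset
          (inter_subset_inter hB.subset hJ.subset))

end Rank

/-- The modular law `(F ⊓ H) ⊔ G = (F ⊔ G) ⊓ H` for flats `G ≤ H` in the lattice of flats. -/
def IsModularElement (M : Matroid α) (F : Set α) : Prop :=
  ∀ G H : Set α, M.IsFlat G → M.IsFlat H → G ⊆ H →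
    M.closure ((F ∩ H) ∪ G) = M.closure (F ∪ G) ∩ H

lemma IsModularElement.mem_closure_of_mem_closure_union (hF : M.IsModularElement F)
    (he : e ∈ M.closure (F ∪ X)) (hFX : F ∩ M.closure (insert e X) ⊆ M.closure X) :
    e ∈ M.closure X := by
  have hlaw := hF (M.closure X) (M.closure (insert e X)) (M.isFlat_closure _)
    (M.isFlat_closure _) (M.closure_subset_closure (subset_insert e X))
  have heE : e ∈ M.E := M.closure_subset_ground _ he
  have hmem : e ∈ M.closure (F ∪ M.closure X) ∩ M.closure (insert e X) :=
    ⟨by rwa [closure_union_closure_right_eq], M.mem_closure_of_mem' (mem_insert e X)⟩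
  rw [← hlaw] at hmem
  exact M.closure_subset_closure_of_subset_closure (union_subset hFX Subset.rfl) hmem

lemma IsModularElement.indep_union (hF : M.IsModularElement F) (hB : M.Indep B) (hBF : B ⊆ F)
    (hJ : M.Indep J) (hFJ : F ∩ M.closure J ⊆ M.closure (B ∩ J)) : M.Indep (B ∪ J) := by
  refine (hB.union_indep_iff_forall_notMem_closure_right hJ).2
    fun e ⟨heJ, heB⟩ hecl ↦ hJ.notMem_closure_sdiff_of_mem heJ ?_
  refine hF.mem_closure_of_mem_closure_union
    (M.closure_subset_closure (union_subset_union_left _ hBF) hecl) ?_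
  rw [insert_sdiff_singleton, insert_eq_of_mem heJ]
  exact hFJ.trans <| M.closure_subset_closure fun x hx ↦ ⟨hx.2, fun hxe ↦ heB (hxe ▸ hx.1)⟩

lemma IsModularElement.rk_add_rk_eq [M.RankFinite] (hF : M.IsModularElement F)
    (hG : M.IsFlat G) : M.rk F + M.rk G = M.rk (F ∪ G) + M.rk (F ∩ G) := by
  obtain ⟨I, hI⟩ := M.exists_isBasis (F ∩ G) (inter_subset_right.trans hG.subset_ground)
  obtain ⟨B, hB, hIB⟩ := hI.indep.subset_isBasis'_of_subset (hI.subset.trans inter_subset_left)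
  obtain ⟨J, hJ, hIJ⟩ := hI.indep.subset_isBasis_of_subset
    (hI.subset.trans inter_subset_right) hG.subset_ground
  refine hB.rk_add_rk_eq_of_indep_union hJ.isBasis' (hF.indep_union hB.indep hB.subset hJ.indep ?_)
  rw [hJ.closure_eq_closure, hG.closure]
  exact hI.subset_closure.trans (M.closure_subset_closure (subset_inter hIB hIJ))

lemma isModularElement_of_rk_add_rk_eq [M.RankFinite] (hF : M.IsFlat F)
    (hmod : ∀ G, M.IsFlat G → M.rk F + M.rk G = M.rk (F ∪ G) + M.rk (F ∩ G)) :
    M.IsModularElement F := by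
  intro G H hG hH hGH
  set K := M.closure ((F ∩ H) ∪ G)
  set L := M.closure (F ∪ G) ∩ H
  have hFG : F ∪ G ⊆ M.closure (F ∪ G) :=
    M.subset_closure _ (union_subset hF.subset_ground hG.subset_ground)
  have hK : (F ∩ H) ∪ G ⊆ K :=
    M.subset_closure _ (union_subset (inter_subset_left.trans hF.subset_ground) hG.subset_ground)
  have hLflat : M.IsFlat L := (M.isFlat_closure _).inter hH
  have hKL : K ⊆ L := (M.closure_subset_closure (union_subset
      (subset_inter (inter_subset_left.trans (subset_union_left.trans hFG)) inter_subset_right)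
      (subset_inter (subset_union_right.trans hFG) hGH))).trans hLflat.closure.subset
  have hcl (X : Set α) (hGX : G ⊆ X) (hX : X ⊆ M.closure (F ∪ G)) :
      M.closure (F ∪ X) = M.closure (F ∪ G) :=
    (M.closure_subset_closure_of_subset_closure (union_subset (subset_union_left.trans hFG) hX)
      ).antisymm (M.closure_subset_closure (union_subset_union_right F hGX))
  have hinter : F ∩ K = F ∩ L := (inter_subset_inter_right F hKL).antisymm
    fun x hx ↦ ⟨hx.1, hK (.inl ⟨hx.1, hx.2.2⟩)⟩
  have hjoin : M.closure (F ∪ K) = M.closure (F ∪ L) :=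
    (hcl K (subset_union_right.trans hK) (hKL.trans inter_subset_left)).trans
      (hcl L (subset_union_right.trans (hK.trans hKL)) inter_subset_left).symm
  have hrk : M.rk L ≤ M.rk K := by
    have hmodK := hmod K (M.isFlat_closure _)
    have hmodL := hmod L hLflat
    rw [rk_closure_congr hjoin, hinter] at hmodK
    omega
  exact (M.isFlat_closure _).eq_of_subset_of_rk_le hLflat hKL hrk

end Matroid

/-- A flat `F` of a matroid `M` with finite ground set is modular if and only if for all
flats `G ⊆ H` one has `(F ∧ H) ∨ G = (F ∨ G) ∧ H` in the lattice of flats. -/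
theorem modular_flat_iff_meet_join {α : Type*} (M : Matroid α) [M.Finite]
    (F : Set α) (hF : M.IsFlat F) :
    (∀ G : Set α, M.IsFlat G → M.rk F + M.rk G = M.rk (F ∪ G) + M.rk (F ∩ G)) ↔
    (∀ G H : Set α, M.IsFlat G → M.IsFlat H → G ⊆ H →
      M.closure ((F ∩ H) ∪ G) = M.closure (F ∪ G) ∩ H) :=
  ⟨isModularElement_of_rk_add_rk_eq hF, fun hlaw _ hG ↦ IsModularElement.rk_add_rk_eq hlaw hG⟩
end

section
/- Let K be a field, n a finite type with decidable equality, and A : Matrix n n K a submonomial matrix (every row and every column contains at most one nonzero entry) that is invertible (IsUnit A.det). Then for all indices i, j the inverse satisfies A⁻¹ i j = (A j i)⁻¹ if A j i ≠ 0 and A⁻¹ i j = 0 otherwise; in particular A⁻¹ is again submonomial. -/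
/-
Over a field `x⁻¹` is zero exactly when `x` is, so the claimed inverse is `Aᵀ` with every entry
inverted. Row `i` of `A` has exactly one nonzero entry (at least one since `det A ≠ 0`), so in
`A * Aᵀ.map (·⁻¹)` the diagonal entry is `A i k * (A i k)⁻¹ = 1`, while off the diagonal every
term `A i k * (A j k)⁻¹` vanishes because column `k` has at most one nonzero entry.
-/

/-- A matrix is submonomial if every row and every column contains at most one nonzero
entry. -/
def Matrix.Submonomial {l m R : Type*} [Zero R] (A : Matrix l m R) : Prop :=
  (∀ i j j', A i j ≠ 0 → A i j' ≠ 0 → j = j') ∧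
  (∀ i i' j, A i j ≠ 0 → A i' j ≠ 0 → i = i')

open scoped Matrix

namespace Matrix.Submonomial

variable {l m R : Type*} [Zero R] {A : Matrix l m R}

theorem transpose (hA : A.Submonomial) : Aᵀ.Submonomial :=
  ⟨fun i _ _ h h' => hA.2 _ _ i h h', fun _ _ j h h' => hA.1 j _ _ h h'⟩

theorem map {S : Type*} [Zero S] (hA : A.Submonomial) {f : R → S} (hf : ∀ x, f x = 0 ↔ x = 0) :
    (A.map f).Submonomial := by
  have hne : ∀ x, f x ≠ 0 ↔ x ≠ 0 := fun x => (hf x).not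
  exact ⟨fun i j j' h h' => hA.1 i j j' ((hne _).1 h) ((hne _).1 h'),
    fun i i' j h h' => hA.2 i i' j ((hne _).1 h) ((hne _).1 h')⟩

theorem mul_transpose_map_inv {K : Type*} [Field K] [Fintype m] [DecidableEq l]
    {A : Matrix l m K} (hA : A.Submonomial) (hrow : ∀ i, ∃ k, A i k ≠ 0) :
    A * Aᵀ.map (·⁻¹) = 1 := by
  ext i j
  simp only [mul_apply, transpose_apply, map_apply]
  obtain rfl | hij := eq_or_ne i j
  · obtain ⟨k₀, hk₀⟩ := hrow i
    have hzero : ∀ k ≠ k₀, A i k = 0 := fun k hk => by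
      by_contra hk'
      exact hk (hA.1 i k k₀ hk' hk₀)
    rw [Finset.sum_eq_single k₀ (fun k _ hk => by rw [hzero k hk, zero_mul])
      (fun h => (h (Finset.mem_univ k₀)).elim), mul_inv_cancel₀ hk₀, one_apply_eq]
  · rw [one_apply_ne hij]
    refine Finset.sum_eq_zero fun k _ => ?_
    by_cases hik : A i k = 0
    · rw [hik, zero_mul]
    · have hjk : A j k = 0 := by_contra fun hjk => hij (hA.2 i j k hik hjk)
      rw [hjk, _root_.inv_zero, mul_zero]

end Matrix.Submonomial

/-- The inverse of an invertible submonomial matrix over a field has entries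
`A⁻¹ i j = (A j i)⁻¹` when `A j i ≠ 0` and `A⁻¹ i j = 0` otherwise; in particular the
inverse is again submonomial. -/
theorem Matrix.Submonomial.inv {K n : Type*} [Field K] [Fintype n] [DecidableEq n]
    (A : Matrix n n K) (hA : A.Submonomial) (h : IsUnit A.det) :
    (∀ i j, (A j i ≠ 0 → A⁻¹ i j = (A j i)⁻¹) ∧ (A j i = 0 → A⁻¹ i j = 0)) ∧
      A⁻¹.Submonomial := by
  have hrow : ∀ i, ∃ k, A i k ≠ 0 := fun i => by
    by_contra! hi
    exact h.ne_zero (det_eq_zero_of_row_eq_zero i hi)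
  have hinv : A⁻¹ = Aᵀ.map (·⁻¹) := inv_eq_right_inv (hA.mul_transpose_map_inv hrow)
  refine ⟨fun i j => ⟨fun _ => by rw [hinv]; rfl, fun hji => ?_⟩,
    hinv ▸ hA.transpose.map fun _ => inv_eq_zero⟩
  rw [hinv, map_apply, transpose_apply, hji]
  exact _root_.inv_zero
end

section
/- Let n : ℕ, let ι be a type, and let v : ι → (Fin n → ℤ) be a family of vectors such that for every nonzero m : Fin n → ℤ there exists ρ : ι with 0 < ∑ i, m i * v ρ i. Let α be a partial order and let F : ι → ℤ → α be a family of antitone functions, each of which is non-constant (for each ρ there exist j, k with F ρ j ≠ F ρ k). If m : Fin n → ℤ satisfies F ρ j ≤ F ρ (j + ∑ i, m i * v ρ i) for all ρ : ι and all j : ℤ, then m = 0. -/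
section AntitonePeriodic

variable {G α : Type*} [AddCommGroup G] [LinearOrder G] [IsOrderedAddMonoid G] [PartialOrder α]
  {f : G → α} {c : G}

theorem Antitone.periodic_of_le_add (hf : Antitone f) (hc : 0 ≤ c)
    (h : ∀ a, f a ≤ f (a + c)) : Function.Periodic f c :=
  fun a => (le_antisymm (h a) (hf (le_add_of_nonneg_right hc))).symm

theorem Antitone.eq_of_periodic [Archimedean G] (hf : Antitone f) (hp : Function.Periodic f c)
    (hc : 0 < c) (a b : G) : f a = f b := by
  wlog hab : a ≤ b generalizing a b
  · exact (this b a (le_of_not_ge hab)).symm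
  -- Some translate `a + n • c` lies beyond `b`, and `f` takes the same value there as at `a`.
  obtain ⟨n, hn⟩ := Archimedean.arch (b - a) hc
  have hb : b ≤ a + n • c := by rw [← sub_le_iff_le_add']; exact hn
  exact le_antisymm (hp.nsmul n a ▸ hf hb) (hf hab)

end AntitonePeriodic

/-- If the vectors `v ρ` positively span (every nonzero `m` pairs positively with some
`v ρ`), and `F ρ : ℤ → α` is a family of antitone non-constant functions such that
`F ρ j ≤ F ρ (j + m · v ρ)` for all `ρ` and `j`, then `m = 0`. -/
theorem eq_zero_of_le_shift {n : ℕ} {ι : Type*} (v : ι → Fin n → ℤ)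
    (hv : ∀ m : Fin n → ℤ, m ≠ 0 → ∃ ρ : ι, 0 < ∑ i, m i * v ρ i)
    {α : Type*} [PartialOrder α] (F : ι → ℤ → α)
    (hanti : ∀ ρ, Antitone (F ρ))
    (hnc : ∀ ρ, ∃ j k : ℤ, F ρ j ≠ F ρ k)
    (m : Fin n → ℤ)
    (hm : ∀ (ρ : ι) (j : ℤ), F ρ j ≤ F ρ (j + ∑ i, m i * v ρ i)) :
    m = 0 := by
  by_contra hne
  obtain ⟨ρ, hpos⟩ := hv m hne
  obtain ⟨j, k, hjk⟩ := hnc ρ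
  have hper := (hanti ρ).periodic_of_le_add hpos.le (hm ρ)
  exact hjk ((hanti ρ).eq_of_periodic hper hpos j k)
end

section
/- Let r a : ℤ and let f : ℤ → ℤ be such that there exists N : ℕ with f j = r for all j ≤ -(N : ℤ) and f j = 0 for all j ≥ (N : ℤ). Then the functions j ↦ j * (f j - f (j+1)) and j ↦ j * (f (j - a) - f (j - a + 1)) have finite support, and ∑ᶠ (j : ℤ), j * (f (j - a) - f (j - a + 1)) = (∑ᶠ (j : ℤ), j * (f j - f (j + 1))) + a * r. -/
/-!
Substituting `j ↦ j + a` turns the shifted degree into `∑ᶠ j, (j + a) * (f j - f (j + 1))`, which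
splits off `a * ∑ᶠ j, (f j - f (j + 1))`; this sum telescopes to `r - 0`.
-/

open Function

theorem Int.sum_Ico_sub_succ {G : Type*} [AddCommGroup G] (f : ℤ → G) {m n : ℤ} (hmn : m ≤ n) :
    ∑ k ∈ Finset.Ico m n, (f k - f (k + 1)) = f m - f n := by
  induction n, hmn using Int.leInduction with
  | base => simp
  | succ n hmn ih =>
    rw [← Finset.insert_Ico_right_eq_Ico_add_one hmn, Finset.sum_insert Finset.right_notMem_Ico, ih]
    abel

theorem support_sub_succ_subset_Ico {G : Type*} [AddGroup G] {f : ℤ → G} {m n : ℤ} {r s : G}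
    (hlow : ∀ j, j ≤ m → f j = r) (hhigh : ∀ j, n ≤ j → f j = s) :
    (support fun k => f k - f (k + 1)) ⊆ Set.Ico m n := by
  intro k hk
  rw [Set.mem_Ico]
  by_contra hk'
  rw [not_and, not_lt] at hk'
  apply hk
  rcases lt_or_ge k m with hkm | hmk
  · simp only [hlow k hkm.le, hlow (k + 1) hkm, sub_self]
  · have hnk := hk' hmk
    simp only [hhigh k hnk, hhigh (k + 1) (by omega), sub_self]

theorem finsum_sub_succ_eq {G : Type*} [AddCommGroup G] {f : ℤ → G} {m n : ℤ} {r s : G}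
    (hmn : m ≤ n) (hlow : ∀ j, j ≤ m → f j = r) (hhigh : ∀ j, n ≤ j → f j = s) :
    ∑ᶠ k, (f k - f (k + 1)) = r - s := by
  rw [finsum_eq_sum_of_support_subset _ (s := Finset.Ico m n)
      (by simpa using support_sub_succ_subset_Ico hlow hhigh),
    Int.sum_Ico_sub_succ f hmn, hlow m le_rfl, hhigh n le_rfl]

theorem finsum_mul_comp_sub {g : ℤ → ℤ} (hg : (support g).Finite) (a : ℤ) :
    ∑ᶠ j, j * g (j - a) = ∑ᶠ j, j * g j + a * ∑ᶠ j, g j := by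
  rw [← finsum_comp_equiv (Equiv.addRight a), mul_finsum,
    ← finsum_add_distrib (hg.subset (support_mul_subset_right _ _))
      (hg.subset (support_mul_subset_right _ _))]
  simp only [Equiv.coe_addRight, add_sub_cancel_right, add_mul]

/-- For `f : ℤ → ℤ` eventually equal to `r` at `-∞` and to `0` at `+∞`, the degree
`∑ᶠ j, j * (f j - f (j+1))` is well-defined (finite support), and shifting by `a`
changes the degree by `a * r`. -/
theorem degree_shift (r a : ℤ) (f : ℤ → ℤ)
    (hf : ∃ N : ℕ, (∀ j : ℤ, j ≤ -(N : ℤ) → f j = r) ∧ (∀ j : ℤ, (N : ℤ) ≤ j → f j = 0)) :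
    (Function.support fun j : ℤ => j * (f j - f (j + 1))).Finite ∧
    (Function.support fun j : ℤ => j * (f (j - a) - f (j - a + 1))).Finite ∧
    ∑ᶠ j : ℤ, j * (f (j - a) - f (j - a + 1)) =
      (∑ᶠ j : ℤ, j * (f j - f (j + 1))) + a * r := by
  obtain ⟨N, hlow, hhigh⟩ := hf
  have hfin : (support fun k => f k - f (k + 1)).Finite :=
    (Set.finite_Ico _ _).subset (support_sub_succ_subset_Ico hlow hhigh)
  refine ⟨hfin.subset (support_mul_subset_right _ _),
    (hfin.preimage sub_left_injective.injOn).subset (support_mul_subset_right _ _), ?_⟩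
  rw [finsum_mul_comp_sub hfin a, finsum_sub_succ_eq (by omega) hlow hhigh, sub_zero]
end

section
/- Let M be a matroid with finite ground set, let F be a flat of M, and let (F_j)_{j ∈ ℤ} be a family of flats of M that is antitone (F_k ⊆ F_j whenever j ≤ k) and such that there exists N : ℕ with F_j = M.E for all j ≤ -(N : ℤ) and F_j = M.closure ∅ for all j ≥ (N : ℤ). Assume that for every j the pair (F, F_j) is modular: M.rk F + M.rk (F_j) = M.rk (F ∪ F_j) + M.rk (F ∩ F_j). Then ∑ᶠ (j : ℤ), j * ((M.rk (F ∩ F_j) : ℤ) - (M.rk (F ∩ F_{j+1}) : ℤ)) + ∑ᶠ (j : ℤ), j * ((M.rk (F ∪ F_j) : ℤ) - (M.rk (F ∪ F_{j+1}) : ℤ)) = ∑ᶠ (j : ℤ), j * ((M.rk (F_j) : ℤ) - (M.rk (F_{j+1}) : ℤ)). -/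
open Matroid

/-!
Modularity of `(F, F_j)` says `rk (F ∩ F_j) + rk (F ∪ F_j) = rk F + rk F_j`, so the rank
jumps of the restricted and contracted chains add up, index by index, to those of the chain
itself: the constant `rk F` cancels in the differences. All three sums are finite because
the chain is constant outside `[-N, N]`.
-/

section JumpSums

variable {β : Type*} {s : ℤ → β} {N : ℕ} {A B : β}

lemma support_mul_sub_succ_finite (hlow : ∀ j : ℤ, j ≤ -(N : ℤ) → s j = A)
    (hhigh : ∀ j : ℤ, (N : ℤ) ≤ j → s j = B) (r : β → ℤ) :
    (Function.support fun j : ℤ => j * (r (s j) - r (s (j + 1)))).Finite := by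
  refine (Set.finite_Icc (-(N : ℤ) - 1) N).subset fun j hj => ?_
  rw [Function.mem_support] at hj
  by_contra hout
  rcases not_and_or.mp hout with hj_low | hj_high
  · rw [hlow j (by omega), hlow (j + 1) (by omega), sub_self, mul_zero] at hj
    exact hj rfl
  · rw [hhigh j (by omega), hhigh (j + 1) (by omega), sub_self, mul_zero] at hj
    exact hj rfl

lemma finsum_mul_sub_succ_add_of_add_eq (hlow : ∀ j : ℤ, j ≤ -(N : ℤ) → s j = A)
    (hhigh : ∀ j : ℤ, (N : ℤ) ≤ j → s j = B) (f g h : β → ℤ) (c : ℤ)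
    (hfg : ∀ j : ℤ, f (s j) + g (s j) = c + h (s j)) :
    (∑ᶠ j : ℤ, j * (f (s j) - f (s (j + 1)))) + (∑ᶠ j : ℤ, j * (g (s j) - g (s (j + 1)))) =
      ∑ᶠ j : ℤ, j * (h (s j) - h (s (j + 1))) := by
  rw [← finsum_add_distrib (support_mul_sub_succ_finite hlow hhigh f)
    (support_mul_sub_succ_finite hlow hhigh g)]
  refine finsum_congr fun j => ?_
  linear_combination j * hfg j - j * hfg (j + 1)

end JumpSums

theorem degree_additivity_modular_general {α : Type*} (M : Matroid α)
    (F : Set α)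
    (Fl : ℤ → Set α)
    (hbd : ∃ N : ℕ, (∀ j : ℤ, j ≤ -(N : ℤ) → Fl j = M.E) ∧
      (∀ j : ℤ, (N : ℤ) ≤ j → Fl j = M.closure ∅))
    (hmod : ∀ j : ℤ, M.rk F + M.rk (Fl j) = M.rk (F ∪ Fl j) + M.rk (F ∩ Fl j)) :
    (∑ᶠ j : ℤ, j * ((M.rk (F ∩ Fl j) : ℤ) - (M.rk (F ∩ Fl (j + 1)) : ℤ))) +
      (∑ᶠ j : ℤ, j * ((M.rk (F ∪ Fl j) : ℤ) - (M.rk (F ∪ Fl (j + 1)) : ℤ))) =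
      ∑ᶠ j : ℤ, j * ((M.rk (Fl j) : ℤ) - (M.rk (Fl (j + 1)) : ℤ)) := by
  obtain ⟨N, hlow, hhigh⟩ := hbd
  refine finsum_mul_sub_succ_add_of_add_eq hlow hhigh (fun S => (M.rk (F ∩ S) : ℤ))
    (fun S => (M.rk (F ∪ S) : ℤ)) (fun S => (M.rk S : ℤ)) (M.rk F) fun j => ?_
  have := hmod j
  omega

/-- Degree additivity `deg(E|F) + deg(E/F) = deg(E)` for a chain of flats `Fl`, each of
which forms a modular pair with the flat `F`. -/
theorem degree_additivity_modular {α : Type*} (M : Matroid α) [M.Finite]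
    (F : Set α) (hF : M.IsFlat F)
    (Fl : ℤ → Set α) (hflat : ∀ j : ℤ, M.IsFlat (Fl j))
    (hanti : ∀ j k : ℤ, j ≤ k → Fl k ⊆ Fl j)
    (hbd : ∃ N : ℕ, (∀ j : ℤ, j ≤ -(N : ℤ) → Fl j = M.E) ∧
      (∀ j : ℤ, (N : ℤ) ≤ j → Fl j = M.closure ∅))
    (hmod : ∀ j : ℤ, M.rk F + M.rk (Fl j) = M.rk (F ∪ Fl j) + M.rk (F ∩ Fl j)) :
    (∑ᶠ j : ℤ, j * ((M.rk (F ∩ Fl j) : ℤ) - (M.rk (F ∩ Fl (j + 1)) : ℤ))) +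
      (∑ᶠ j : ℤ, j * ((M.rk (F ∪ Fl j) : ℤ) - (M.rk (F ∪ Fl (j + 1)) : ℤ))) =
      ∑ᶠ j : ℤ, j * ((M.rk (Fl j) : ℤ) - (M.rk (Fl (j + 1)) : ℤ)) :=
  degree_additivity_modular_general M F Fl hbd hmod
end
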